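/- In the uniform price (first-rejected-bid) K-item auction, the realized utility decomposes according to which bid sets the price: u(b,β) = Σ_{i=1}^K 1[β_{K-i} > b_{i+1} ≥ β_{K-i+1}]·(Σ_{l=1}^i v_l − i·b_{i+1}) + Σ_{i=1}^K 1[b_i ≥ β_{K-i+1} > b_{i+1}]·(Σ_{l=1}^i v_l − i·β_{K-i+1}), where b_{K+1} := 0 and β_0 := +∞ conventionally, and these events are pairwise disjoint with exactly one occurring. -/

import Mathlib

/-!
The number of items won, `x = alloc K b β`, is the largest `k ≤ K` such that the bidder's `j`-th
bid beats the opposing `(K+1-j)`-th bid for all `j ≤ k`. Since both bid vectors are non-increasing,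
for `1 ≤ x` this is equivalent to `β_{K-x+1} ≤ b_x` together with `b_{x+1} < β_{K-x}`. Each of the
events `eventA i`, `eventB i` implies these two conditions at `i`, hence forces `x = i`; so each sum
has at most one nonzero term, the one at `i = x`. When `1 ≤ x`, exactly one of `eventA x`,
`eventB x` holds, according to which of `b_{x+1}` and `β_{K-x+1}` is the price.
-/

open scoped Classical

/-- Allocation in the K-item standard auction. -/
noncomputable def alloc (K : ℕ) (b β : ℕ → ℝ) : ℕ :=
  Nat.findGreatest (fun k => ∀ j, 1 ≤ j → j ≤ k → β (K + 1 - j) ≤ b j) K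

/-- Uniform price: the (K+1)-th highest bid overall, i.e. `max (b (x+1)) (β (K-x+1))`. -/
noncomputable def price (K : ℕ) (b β : ℕ → ℝ) : ℝ :=
  max (b (alloc K b β + 1)) (β (K - alloc K b β + 1))

/-- Uniform-price utility: `∑_{l=1}^{x} (v_l − p)`. -/
noncomputable def util (K : ℕ) (v b β : ℕ → ℝ) : ℝ :=
  ∑ l ∈ Finset.Icc 1 (alloc K b β), (v l - price K b β)

/-- Event: the price is set by the bidder's own bid `b (i+1)` and `x = i`
(with the convention `β 0 = +∞`, encoded by the disjunct `i = K`). -/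
def eventA (K : ℕ) (b β : ℕ → ℝ) (i : ℕ) : Prop :=
  (i = K ∨ b (i + 1) < β (K - i)) ∧ β (K - i + 1) ≤ b (i + 1)

/-- Event: the price is set by the opposing bid `β (K-i+1)` and `x = i`. -/
def eventB (K : ℕ) (b β : ℕ → ℝ) (i : ℕ) : Prop :=
  β (K - i + 1) ≤ b i ∧ b (i + 1) < β (K - i + 1)

theorem Finset.sum_ite_eq_of_imp_eq {ι M : Type*} [AddCommMonoid M] {s : Finset ι}
    {p : ι → Prop} [DecidablePred p] (f : ι → M) (a : ι) (h : ∀ i ∈ s, p i → i = a) :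
    (∑ i ∈ s, if p i then f i else 0) = if a ∈ s ∧ p a then f a else 0 := by
  by_cases ha : a ∈ s ∧ p a
  · rw [if_pos ha, Finset.sum_eq_single_of_mem a ha.1, if_pos ha.2]
    intro i hi hia
    exact if_neg fun hp => hia (h i hi hp)
  · rw [if_neg ha]
    refine Finset.sum_eq_zero fun i hi => if_neg fun hp => ?_
    obtain rfl := h i hi hp
    exact ha ⟨hi, hp⟩

section Allocation

/-- `alloc K b β` is `Nat.findGreatest (WinsFirst K b β) K` after unfolding. -/
def WinsFirst (K : ℕ) (b β : ℕ → ℝ) (k : ℕ) : Prop :=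
  ∀ j, 1 ≤ j → j ≤ k → β (K + 1 - j) ≤ b j

variable {K : ℕ} {b β : ℕ → ℝ}

theorem alloc_le : alloc K b β ≤ K :=
  Nat.findGreatest_le (P := WinsFirst K b β) K

theorem winsFirst_alloc : WinsFirst K b β (alloc K b β) :=
  Nat.findGreatest_spec (P := WinsFirst K b β) (Nat.zero_le K)
    fun _ h0 h => absurd (h0.trans h) (by omega)

theorem le_alloc {i : ℕ} (hiK : i ≤ K) (hwins : WinsFirst K b β i) :
    i ≤ alloc K b β :=
  Nat.le_findGreatest (P := WinsFirst K b β) hiK hwins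

theorem not_winsFirst_of_alloc_lt {i : ℕ} (hxi : alloc K b β < i) (hiK : i ≤ K) :
    ¬ WinsFirst K b β i :=
  Nat.findGreatest_is_greatest (P := WinsFirst K b β) hxi hiK

theorem alloc_eq_iff (hb : ∀ i j, 1 ≤ i → i ≤ j → j ≤ K → b j ≤ b i)
    (hβ : ∀ i j, 1 ≤ i → i ≤ j → j ≤ K → β j ≤ β i) {i : ℕ} (hi : 1 ≤ i) (hiK : i ≤ K) :
    alloc K b β = i ↔ β (K - i + 1) ≤ b i ∧ (i < K → b (i + 1) < β (K - i)) := by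
  constructor
  · rintro rfl
    refine ⟨by simpa [Nat.sub_add_comm hiK] using winsFirst_alloc _ hi le_rfl, fun hlt => ?_⟩
    by_contra! hle
    refine not_winsFirst_of_alloc_lt (lt_add_one (alloc K b β)) hlt fun j hj hjx => ?_
    rcases Nat.lt_or_eq_of_le hjx with hjx | rfl
    · exact winsFirst_alloc j hj (Nat.le_of_lt_succ hjx)
    · simpa [show K + 1 - (alloc K b β + 1) = K - alloc K b β by omega] using hle
  · rintro ⟨hwin, hlose⟩
    have hwins_upto : WinsFirst K b β i := fun j hj hji =>
      calc β (K + 1 - j) ≤ β (K - i + 1) := hβ _ _ (by omega) (by omega) (by omega)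
        _ ≤ b i := hwin
        _ ≤ b j := hb j i hj hji hiK
    refine le_antisymm ?_ (le_alloc hiK hwins_upto)
    by_contra! hgt
    have hloses := hlose (hgt.trans_le alloc_le)
    have := winsFirst_alloc (i + 1) (by omega) hgt
    rw [show K + 1 - (i + 1) = K - i by omega] at this
    exact hloses.not_ge this

theorem eq_alloc_of_eventA (hb : ∀ i j, 1 ≤ i → i ≤ j → j ≤ K → b j ≤ b i)
    (hb0 : ∀ i, 1 ≤ i → i ≤ K → 0 ≤ b i) (hbK1 : b (K + 1) = 0)
    (hβ : ∀ i j, 1 ≤ i → i ≤ j → j ≤ K → β j ≤ β i) {i : ℕ} (hi : i ∈ Finset.Icc 1 K)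
    (hA : eventA K b β i) : i = alloc K b β := by
  obtain ⟨hi1, hiK⟩ := Finset.mem_Icc.mp hi
  have hb_succ : b (i + 1) ≤ b i := by
    rcases hiK.lt_or_eq with hlt | rfl
    · exact hb i (i + 1) hi1 (by omega) hlt
    · exact hbK1 ▸ hb0 i hi1 le_rfl
  refine ((alloc_eq_iff hb hβ hi1 hiK).mpr ⟨hA.2.trans hb_succ, fun hlt => ?_⟩).symm
  exact hA.1.resolve_left hlt.ne

theorem eq_alloc_of_eventB (hb : ∀ i j, 1 ≤ i → i ≤ j → j ≤ K → b j ≤ b i)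
    (hβ : ∀ i j, 1 ≤ i → i ≤ j → j ≤ K → β j ≤ β i) {i : ℕ} (hi : i ∈ Finset.Icc 1 K)
    (hB : eventB K b β i) : i = alloc K b β := by
  obtain ⟨hi1, hiK⟩ := Finset.mem_Icc.mp hi
  refine ((alloc_eq_iff hb hβ hi1 hiK).mpr ⟨hB.1, fun hlt => ?_⟩).symm
  exact hB.2.trans_le (hβ _ _ (by omega) (by omega) (by omega))

theorem not_eventA_and_eventB {i : ℕ} : ¬ (eventA K b β i ∧ eventB K b β i) :=
  fun ⟨hA, hB⟩ => hB.2.not_ge hA.2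

theorem eventA_or_eventB_alloc (hb : ∀ i j, 1 ≤ i → i ≤ j → j ≤ K → b j ≤ b i)
    (hβ : ∀ i j, 1 ≤ i → i ≤ j → j ≤ K → β j ≤ β i) (hx : 1 ≤ alloc K b β) :
    eventA K b β (alloc K b β) ∨ eventB K b β (alloc K b β) := by
  obtain ⟨hwin, hlose⟩ := (alloc_eq_iff hb hβ hx alloc_le).mp rfl
  rcases le_or_gt (β (K - alloc K b β + 1)) (b (alloc K b β + 1)) with hle | hlt
  · exact Or.inl ⟨alloc_le.eq_or_lt.imp id hlose, hle⟩
  · exact Or.inr ⟨hwin, hlt⟩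

end Allocation

theorem util_eq_sum_sub_mul_price (K : ℕ) (v b β : ℕ → ℝ) :
    util K v b β = ∑ l ∈ Finset.Icc 1 (alloc K b β), v l - alloc K b β * price K b β := by
  simp [util, Finset.sum_sub_distrib]

theorem uniform_utility_decomposition_general (K : ℕ) (v b β : ℕ → ℝ)
    (hb : ∀ i j, 1 ≤ i → i ≤ j → j ≤ K → b j ≤ b i)
    (hb01 : ∀ i, 1 ≤ i → i ≤ K → b i ∈ Set.Icc (0:ℝ) 1)
    (hβ : ∀ i j, 1 ≤ i → i ≤ j → j ≤ K → β j ≤ β i)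
    (hbK1 : b (K + 1) = 0) :
    (util K v b β
        = (∑ i ∈ Finset.Icc 1 K,
            if eventA K b β i then (∑ l ∈ Finset.Icc 1 i, v l) - (i : ℝ) * b (i + 1) else 0)
          + ∑ i ∈ Finset.Icc 1 K,
              if eventB K b β i then (∑ l ∈ Finset.Icc 1 i, v l) - (i : ℝ) * β (K - i + 1) else 0)
    ∧ (∀ i ∈ Finset.Icc 1 K, ∀ j ∈ Finset.Icc 1 K,
        (eventA K b β i → eventA K b β j → i = j)
        ∧ (eventB K b β i → eventB K b β j → i = j)
        ∧ (eventA K b β i → ¬ eventB K b β j))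
    ∧ (1 ≤ alloc K b β → ∃ i ∈ Finset.Icc 1 K, eventA K b β i ∨ eventB K b β i) := by
  have hA : ∀ i ∈ Finset.Icc 1 K, eventA K b β i → i = alloc K b β := fun _ =>
    eq_alloc_of_eventA hb (fun i h1 h2 => (hb01 i h1 h2).1) hbK1 hβ
  have hB : ∀ i ∈ Finset.Icc 1 K, eventB K b β i → i = alloc K b β := fun _ =>
    eq_alloc_of_eventB hb hβ
  have hmem : 1 ≤ alloc K b β → alloc K b β ∈ Finset.Icc 1 K :=
    fun hx => Finset.mem_Icc.mpr ⟨hx, alloc_le⟩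
  refine ⟨?_, fun i hi j hj => ⟨fun h h' => (hA i hi h).trans (hA j hj h').symm,
    fun h h' => (hB i hi h).trans (hB j hj h').symm, fun h h' => ?_⟩,
    fun hx => ⟨_, hmem hx, eventA_or_eventB_alloc hb hβ hx⟩⟩
  · rw [util_eq_sum_sub_mul_price, Finset.sum_ite_eq_of_imp_eq _ _ hA,
      Finset.sum_ite_eq_of_imp_eq _ _ hB]
    rcases Nat.eq_zero_or_pos (alloc K b β) with hx | hx
    · simp [hx]
    · rcases eventA_or_eventB_alloc hb hβ hx with hAx | hBx
      · have hnBx : ¬ eventB K b β (alloc K b β) := fun hBx => not_eventA_and_eventB ⟨hAx, hBx⟩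
        simp [hmem hx, hAx, hnBx, price, max_eq_left hAx.2]
      · have hnAx : ¬ eventA K b β (alloc K b β) := fun hAx => not_eventA_and_eventB ⟨hAx, hBx⟩
        simp [hmem hx, hnAx, hBx, price, max_eq_right hBx.2.le]
  · obtain rfl := (hA i hi h).trans (hB j hj h').symm
    exact not_eventA_and_eventB ⟨h, h'⟩

/-- Decomposition of the realized uniform-price utility according to which bid sets
the price; the 2K events are pairwise disjoint and (whenever at least one item is
won) exactly one of them occurs. -/
theorem uniform_utility_decomposition (K : ℕ) (v b β : ℕ → ℝ)
    (hK : 1 ≤ K)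
    (hv : ∀ i j, 1 ≤ i → i ≤ j → j ≤ K → v j ≤ v i)
    (hv01 : ∀ i, 1 ≤ i → i ≤ K → v i ∈ Set.Icc (0:ℝ) 1)
    (hb : ∀ i j, 1 ≤ i → i ≤ j → j ≤ K → b j ≤ b i)
    (hb01 : ∀ i, 1 ≤ i → i ≤ K → b i ∈ Set.Icc (0:ℝ) 1)
    (hβ : ∀ i j, 1 ≤ i → i ≤ j → j ≤ K → β j ≤ β i)
    (hβ01 : ∀ i, 1 ≤ i → i ≤ K → β i ∈ Set.Icc (0:ℝ) 1)
    (hbK1 : b (K + 1) = 0) :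
    (util K v b β
        = (∑ i ∈ Finset.Icc 1 K,
            if eventA K b β i then (∑ l ∈ Finset.Icc 1 i, v l) - (i : ℝ) * b (i + 1) else 0)
          + ∑ i ∈ Finset.Icc 1 K,
              if eventB K b β i then (∑ l ∈ Finset.Icc 1 i, v l) - (i : ℝ) * β (K - i + 1) else 0)
    ∧ (∀ i ∈ Finset.Icc 1 K, ∀ j ∈ Finset.Icc 1 K,
        (eventA K b β i → eventA K b β j → i = j)
        ∧ (eventB K b β i → eventB K b β j → i = j)
        ∧ (eventA K b β i → ¬ eventB K b β j))
    ∧ (1 ≤ alloc K b β → ∃ i ∈ Finset.Icc 1 K, eventA K b β i ∨ eventB K b β i) :=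
  uniform_utility_decomposition_general K v b β hb hb01 hβ hbK1
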